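/- arXiv:1605.00604 — 5 statements merged into one kernel-verified Lean document; each statement's English description precedes it below -/
import Mathlib

section
/- Static safety invariant preservation under braking: if ‖p_r − p_o‖ > v_r²/(2b) holds and the robot brakes with deceleration b > 0, then for all t in [0, v_r/b], the distance between the robot's new position and the obstacle remains positive and satisfies ‖p(t) − p_o‖ > (v_r − b t)²/(2b). -/
theorem static_safety_invariant_braking
    (p_r p_o : EuclideanSpace ℝ (Fin 2)) (v_r b : ℝ)
    (p : ℝ → EuclideanSpace ℝ (Fin 2))
    (hv : 0 ≤ v_r) (hb : 0 < b)
    (hinv : ‖p_r - p_o‖ > v_r ^ 2 / (2 * b))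
    (htraj : ∀ t ∈ Set.Icc (0:ℝ) (v_r / b), ‖p t - p_r‖ ≤ v_r * t - b / 2 * t ^ 2) :
    ∀ t ∈ Set.Icc (0:ℝ) (v_r / b),
      0 < ‖p t - p_o‖ ∧ ‖p t - p_o‖ > (v_r - b * t) ^ 2 / (2 * b) := by
  intro t ht
  have h1 := htraj t ht
  have h2 : ‖p_r - p_o‖ ≤ ‖p_r - p t‖ + ‖p t - p_o‖ := by
    have := norm_add_le (p_r - p t) (p t - p_o)
    simpa using this
  rw [norm_sub_rev p_r (p t)] at h2
  have key : ‖p t - p_o‖ > (v_r - b * t) ^ 2 / (2 * b) := by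
    have hb2 : 0 < 2 * b := by linarith
    rw [gt_iff_lt, div_lt_iff₀ hb2]
    rw [gt_iff_lt, div_lt_iff₀ hb2] at hinv
    nlinarith [ht.1, ht.2]
  refine ⟨lt_of_le_of_lt (by positivity) key, key⟩
end

section
/- Static safety invariant preservation under acceleration: assume 0 ≤ v_r, 0 ≤ A, 0 < b, 0 < ε, and ‖p_r − p_o‖ > v_r²/(2b) + (A/b+1)(A ε²/2 + ε v_r). If the robot accelerates with a ≤ A for time t ∈ [0, ε] along any trajectory with speed v(s) = v_r + a s ≥ 0, then ‖p(t) − p_o‖ > (v_r + a t)²/(2b). -/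
/-!
Braking from speed `v` at deceleration `b` takes distance `v² / (2b)`. After travelling
`d = v t + a t² / 2` under acceleration `a`, the new braking distance exceeds the old one by
exactly `(a / b) d`, so the distance used up plus the growth of the braking distance is
`(1 + a / b) d`. This is at most `(1 + A / b) (A ε² / 2 + ε v)`, the margin assumed beyond the
initial braking distance, and the triangle inequality finishes the argument.
-/

noncomputable def displacement (v a t : ℝ) : ℝ := v * t + a / 2 * t ^ 2

lemma displacement_nonneg {v a t : ℝ} (ht : 0 ≤ t) (hv : 0 ≤ v) (hvt : 0 ≤ v + a * t) :
    0 ≤ displacement v a t := by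
  have h : displacement v a t = t * ((v + (v + a * t)) / 2) := by unfold displacement; ring
  rw [h]
  positivity

lemma displacement_le_displacement {v a A t ε : ℝ} (hv : 0 ≤ v) (hA : 0 ≤ A) (ha : a ≤ A)
    (ht : 0 ≤ t) (htε : t ≤ ε) : displacement v a t ≤ displacement v A ε := by
  have hvt : v * t ≤ v * ε := mul_le_mul_of_nonneg_left htε hv
  have hat : a * t ^ 2 ≤ A * ε ^ 2 := by
    rcases le_or_gt a 0 with ha0 | ha0
    · nlinarith [sq_nonneg t, sq_nonneg ε]
    · calc a * t ^ 2 ≤ A * t ^ 2 := by gcongr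
        _ ≤ A * ε ^ 2 := by gcongr
  unfold displacement
  linarith

lemma displacement_add_sq_div (v a t : ℝ) {b : ℝ} (hb : b ≠ 0) :
    displacement v a t + (v + a * t) ^ 2 / (2 * b)
      = v ^ 2 / (2 * b) + (1 + a / b) * displacement v a t := by
  unfold displacement
  field_simp
  ring

lemma displacement_add_sq_div_le {v a A b t ε : ℝ} (hv : 0 ≤ v) (hA : 0 ≤ A) (hb : 0 < b)
    (ha : a ≤ A) (ht : 0 ≤ t) (htε : t ≤ ε) (hvt : 0 ≤ v + a * t) :
    displacement v a t + (v + a * t) ^ 2 / (2 * b)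
      ≤ v ^ 2 / (2 * b) + (A / b + 1) * displacement v A ε := by
  have hd := displacement_nonneg ht hv hvt
  have hab : a / b ≤ A / b := div_le_div_of_nonneg_right ha hb.le
  rw [displacement_add_sq_div v a t hb.ne']
  gcongr v ^ 2 / (2 * b) + ?_
  calc (1 + a / b) * displacement v a t ≤ (A / b + 1) * displacement v a t :=
        mul_le_mul_of_nonneg_right (by linarith) hd
    _ ≤ (A / b + 1) * displacement v A ε :=
        mul_le_mul_of_nonneg_left (displacement_le_displacement hv hA ha ht htε) (by positivity)

theorem static_safety_invariant_accel_general
    (p_r p_o : EuclideanSpace ℝ (Fin 2)) (v_r A b ε a : ℝ)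
    (p : ℝ → EuclideanSpace ℝ (Fin 2))
    (hv : 0 ≤ v_r) (hA : 0 ≤ A) (hb : 0 < b)
    (ha : a ≤ A)
    (hspeed : ∀ s ∈ Set.Icc (0:ℝ) ε, 0 ≤ v_r + a * s)
    (hinv : ‖p_r - p_o‖ > v_r ^ 2 / (2 * b) + (A / b + 1) * (A * ε ^ 2 / 2 + ε * v_r))
    (htraj : ∀ t ∈ Set.Icc (0:ℝ) ε, ‖p t - p_r‖ ≤ v_r * t + a / 2 * t ^ 2) :
    ∀ t ∈ Set.Icc (0:ℝ) ε, ‖p t - p_o‖ > (v_r + a * t) ^ 2 / (2 * b) := by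
  intro t ht
  have hmargin := displacement_add_sq_div_le hv hA hb ha ht.1 ht.2 (hspeed t ht)
  have hmax_displacement : displacement v_r A ε = A * ε ^ 2 / 2 + ε * v_r := by unfold displacement; ring
  have htriangle : ‖p_r - p_o‖ ≤ ‖p t - p_r‖ + ‖p t - p_o‖ := by
    simpa only [norm_sub_rev p_r (p t)] using norm_sub_le_norm_sub_add_norm_sub p_r (p t) p_o
  have hmoved : ‖p t - p_r‖ ≤ displacement v_r a t := htraj t ht
  rw [hmax_displacement] at hmargin
  linarith

theorem static_safety_invariant_accel
    (p_r p_o : EuclideanSpace ℝ (Fin 2)) (v_r A b ε a : ℝ)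
    (p : ℝ → EuclideanSpace ℝ (Fin 2))
    (hv : 0 ≤ v_r) (hA : 0 ≤ A) (hb : 0 < b) (hε : 0 < ε)
    (ha : a ≤ A)
    (hspeed : ∀ s ∈ Set.Icc (0:ℝ) ε, 0 ≤ v_r + a * s)
    (hinv : ‖p_r - p_o‖ > v_r ^ 2 / (2 * b) + (A / b + 1) * (A * ε ^ 2 / 2 + ε * v_r))
    (htraj : ∀ t ∈ Set.Icc (0:ℝ) ε, ‖p t - p_r‖ ≤ v_r * t + a / 2 * t ^ 2) :
    ∀ t ∈ Set.Icc (0:ℝ) ε, ‖p t - p_o‖ > (v_r + a * t) ^ 2 / (2 * b) :=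
  static_safety_invariant_accel_general p_r p_o v_r A b ε a p hv hA hb ha hspeed hinv htraj
end

section
/- Passive safety invariant preservation under braking with a moving obstacle: assume 0 < b, 0 ≤ V, 0 ≤ v_r, and ‖p_r − p_o‖ > v_r²/(2b) + V·v_r/b. If for t ∈ [0, v_r/b] the robot moves with speed v_r − b t (so ‖p_r(t) − p_r‖ ≤ v_r t − (b/2)t²) and the obstacle moves with speed at most V (so ‖p_o(t) − p_o‖ ≤ V t), then ‖p_r(t) − p_o(t)‖ > (v_r − b t)²/(2b) + V·(v_r − b t)/b. -/
theorem passive_safety_invariant_braking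
    (p_r p_o : EuclideanSpace ℝ (Fin 2)) (v_r b V : ℝ)
    (pr po : ℝ → EuclideanSpace ℝ (Fin 2))
    (hb : 0 < b) (hV : 0 ≤ V) (hv : 0 ≤ v_r)
    (hinv : ‖p_r - p_o‖ > v_r ^ 2 / (2 * b) + V * v_r / b)
    (hrtraj : ∀ t ∈ Set.Icc (0:ℝ) (v_r / b), ‖pr t - p_r‖ ≤ v_r * t - b / 2 * t ^ 2)
    (hotraj : ∀ t ∈ Set.Icc (0:ℝ) (v_r / b), ‖po t - p_o‖ ≤ V * t) :
    ∀ t ∈ Set.Icc (0:ℝ) (v_r / b),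
      ‖pr t - po t‖ > (v_r - b * t) ^ 2 / (2 * b) + V * (v_r - b * t) / b := by
  intro t ht
  have h1 := hrtraj t ht
  have h2 := hotraj t ht
  have htri : ‖p_r - p_o‖ ≤ ‖pr t - p_r‖ + ‖pr t - po t‖ + ‖po t - p_o‖ := by
    calc ‖p_r - p_o‖ = ‖(p_r - pr t) + (pr t - po t) + (po t - p_o)‖ := by abel_nf
      _ ≤ ‖p_r - pr t‖ + ‖pr t - po t‖ + ‖po t - p_o‖ := by
          exact (norm_add_le _ _).trans (by gcongr; exact norm_add_le _ _)
      _ = ‖pr t - p_r‖ + ‖pr t - po t‖ + ‖po t - p_o‖ := by rw [norm_sub_rev]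
  have key : (v_r - b * t) ^ 2 / (2 * b) + V * (v_r - b * t) / b
      = v_r ^ 2 / (2 * b) + V * v_r / b - (v_r * t - b / 2 * t ^ 2) - V * t := by
    field_simp; ring
  linarith
end

section
/- Passive safety invariant preservation under acceleration with a moving obstacle: assume 0 ≤ v_r, 0 ≤ A, 0 < b, 0 ≤ V, 0 < ε, and ‖p_r − p_o‖ > v_r²/(2b) + V v_r/b + (A/b + 1)(A ε²/2 + ε(v_r + V)). If during time t ∈ [0, ε] the robot moves with speed v_r + A s (so ‖p_r(t) − p_r‖ ≤ v_r t + (A/2)t²) and the obstacle moves with speed at most V (so ‖p_o(t) − p_o‖ ≤ V t), then with v(t) = v_r + A t, ‖p_r(t) − p_o(t)‖ > v(t)²/(2b) + V·v(t)/b. -/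
theorem passive_safety_invariant_accel
    (p_r p_o : EuclideanSpace ℝ (Fin 2)) (v_r A b V ε : ℝ)
    (pr po : ℝ → EuclideanSpace ℝ (Fin 2))
    (hv : 0 ≤ v_r) (hA : 0 ≤ A) (hb : 0 < b) (hV : 0 ≤ V) (hε : 0 < ε)
    (hinv : ‖p_r - p_o‖ > v_r ^ 2 / (2 * b) + V * v_r / b +
      (A / b + 1) * (A * ε ^ 2 / 2 + ε * (v_r + V)))
    (hrtraj : ∀ t ∈ Set.Icc (0:ℝ) ε, ‖pr t - p_r‖ ≤ v_r * t + A / 2 * t ^ 2)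
    (hotraj : ∀ t ∈ Set.Icc (0:ℝ) ε, ‖po t - p_o‖ ≤ V * t) :
    ∀ t ∈ Set.Icc (0:ℝ) ε,
      ‖pr t - po t‖ > (v_r + A * t) ^ 2 / (2 * b) + V * (v_r + A * t) / b := by
  intro t ht
  obtain ⟨ht0, htε⟩ := ht
  have h1 := hrtraj t ⟨ht0, htε⟩
  have h2 := hotraj t ⟨ht0, htε⟩
  have htri : ‖p_r - p_o‖ ≤ ‖p_r - pr t‖ + ‖pr t - po t‖ + ‖po t - p_o‖ := by
    calc ‖p_r - p_o‖ = ‖(p_r - pr t) + (pr t - po t) + (po t - p_o)‖ := by abel_nf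
      _ ≤ _ := norm_add₃_le
  rw [norm_sub_rev p_r (pr t)] at htri
  have key : v_r ^ 2 / (2 * b) + V * v_r / b +
      (A / b + 1) * (A * ε ^ 2 / 2 + ε * (v_r + V)) ≥
      (v_r + A * t) ^ 2 / (2 * b) + V * (v_r + A * t) / b +
      (v_r * t + A / 2 * t ^ 2) + V * t := by
    rw [ge_iff_le, ← sub_nonneg]
    have h3 : t ^ 2 ≤ ε ^ 2 := by nlinarith
    have hexp : v_r ^ 2 / (2 * b) + V * v_r / b +
        (A / b + 1) * (A * ε ^ 2 / 2 + ε * (v_r + V)) -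
        ((v_r + A * t) ^ 2 / (2 * b) + V * (v_r + A * t) / b +
        (v_r * t + A / 2 * t ^ 2) + V * t) =
        (A ^ 2 * (ε ^ 2 - t ^ 2) / 2 + A * v_r * (ε - t) + A * V * (ε - t)) / b +
        (A * (ε ^ 2 - t ^ 2) / 2 + v_r * (ε - t) + V * (ε - t)) := by
      field_simp
      ring
    rw [hexp]
    have hεt : 0 ≤ ε - t := by linarith
    have hsq : 0 ≤ ε ^ 2 - t ^ 2 := by linarith
    positivity
  linarith
end

section
/- For a robot with actual acceleration a with −b ≤ a < 0 and v_r + a ε < 0 (it stops before the control cycle ends), the robot stops at time t_b = −v_r/a and travels exactly −v_r²/(2a); combined with an obstacle of speed at most V, the required safety distance is −v_r²/(2a) − V·v_r/a, i.e., if ‖p_r − p_o‖ > −v_r²/(2a) − V·v_r/a then the robot and obstacle remain at positive distance for all t ∈ [0, t_b]. -/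
theorem actual_acceleration_safety
    (p_r p_o : EuclideanSpace ℝ (Fin 2)) (v_r a b ε V : ℝ)
    (pr po : ℝ → EuclideanSpace ℝ (Fin 2))
    (hv : 0 ≤ v_r) (hab : -b ≤ a) (ha : a < 0) (hstop : v_r + a * ε < 0) (hV : 0 ≤ V)
    (hrtraj : ∀ t ∈ Set.Icc (0:ℝ) (-v_r / a), ‖pr t - p_r‖ ≤ v_r * t + a / 2 * t ^ 2)
    (hotraj : ∀ t ∈ Set.Icc (0:ℝ) (-v_r / a), ‖po t - p_o‖ ≤ V * t)
    (hdist : ‖p_r - p_o‖ > -v_r ^ 2 / (2 * a) - V * v_r / a) :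
    (v_r * (-v_r / a) + a / 2 * (-v_r / a) ^ 2 = -v_r ^ 2 / (2 * a)) ∧
    ∀ t ∈ Set.Icc (0:ℝ) (-v_r / a), 0 < ‖pr t - po t‖ := by
  have ha' : a ≠ 0 := ne_of_lt ha
  constructor
  · field_simp
    ring
  · intro t ht
    obtain ⟨ht0, ht1⟩ := ht
    have h1 := hrtraj t ⟨ht0, ht1⟩
    have h2 := hotraj t ⟨ht0, ht1⟩
    have hr : v_r * t + a / 2 * t ^ 2 ≤ -v_r ^ 2 / (2 * a) := by
      have key : -v_r ^ 2 / (2 * a) - (v_r * t + a / 2 * t ^ 2)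
          = -(a / 2) * (t + v_r / a) ^ 2 := by
        field_simp
        ring
      nlinarith [sq_nonneg (t + v_r / a), ha]
    have ho : V * t ≤ -V * v_r / a := by
      have h3 : V * t ≤ V * (-v_r / a) := mul_le_mul_of_nonneg_left ht1 hV
      have h4 : V * (-v_r / a) = -V * v_r / a := by ring
      linarith
    have htri : ‖p_r - p_o‖ ≤ ‖pr t - p_r‖ + ‖pr t - po t‖ + ‖po t - p_o‖ := by
      have := norm_sub_le_norm_sub_add_norm_sub (p_r) (pr t) (p_o)
      calc ‖p_r - p_o‖ ≤ ‖p_r - pr t‖ + ‖pr t - p_o‖ := norm_sub_le_norm_sub_add_norm_sub _ _ _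
        _ ≤ ‖p_r - pr t‖ + (‖pr t - po t‖ + ‖po t - p_o‖) := by
            linarith [norm_sub_le_norm_sub_add_norm_sub (pr t) (po t) p_o]
        _ = ‖pr t - p_r‖ + ‖pr t - po t‖ + ‖po t - p_o‖ := by rw [norm_sub_rev p_r (pr t)]; ring
    have : -V * v_r / a = -(V * v_r / a) := by ring
    linarith
end
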